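/- Let Δ ⊂ ℝ^d be a d-dimensional lattice polytope containing 0 in its interior. Then Δ^{FI} = {0} if and only if 0 is interior to Δ and Δ is contained in some pseudoreflexive polytope. -/

import Mathlib

open Finset Pointwise MeasureTheory
noncomputable section

variable {d : ℕ}

/-- Standard pairing on ℝ^d. -/
def pairR (x y : Fin d → ℝ) : ℝ := ∑ i, x i * y i

/-- Embedding of ℤ^d into ℝ^d. -/
def toR (n : Fin d → ℤ) : Fin d → ℝ := fun i => (n i : ℝ)

/-- A point of ℝ^d with integer coordinates. -/
def IsLatticePoint (x : Fin d → ℝ) : Prop := ∀ i, ∃ z : ℤ, x i = (z : ℝ)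

/-- ord_Δ(y) = min_{x ∈ Δ} ⟨x, y⟩. -/
def ordP (Δ : Set (Fin d → ℝ)) (y : Fin d → ℝ) : ℝ := sInf ((fun x => pairR x y) '' Δ)

/-- The Fine interior of Δ. -/
def fineInterior (Δ : Set (Fin d → ℝ)) : Set (Fin d → ℝ) :=
  {x | ∀ n : Fin d → ℤ, n ≠ 0 → ordP Δ (toR n) + 1 ≤ pairR x (toR n)}

/-- A lattice polytope: the convex hull of finitely many lattice points. -/
def IsLatticePolytope (Δ : Set (Fin d → ℝ)) : Prop :=
  ∃ S : Finset (Fin d → ℤ), Δ = convexHull ℝ (toR '' (S : Set (Fin d → ℤ)))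

/-- The polar set Δ* = {y : ⟨x,y⟩ ≥ -1 for all x ∈ Δ}. -/
def polarSet (Δ : Set (Fin d → ℝ)) : Set (Fin d → ℝ) :=
  {y | ∀ x ∈ Δ, -1 ≤ pairR x y}

/-- [P] = convex hull of the lattice points of P. -/
def latticeHull (P : Set (Fin d → ℝ)) : Set (Fin d → ℝ) :=
  convexHull ℝ {x ∈ P | IsLatticePoint x}

/-- Pseudoreflexive polytope: Fine interior {0} and Δ = [[Δ*]*]. -/
def IsPseudoreflexive (Δ : Set (Fin d → ℝ)) : Prop :=
  IsLatticePolytope Δ ∧ fineInterior Δ = {0} ∧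
    Δ = latticeHull (polarSet (latticeHull (polarSet Δ)))

/-- (Exposed) face of Δ cut out by a supporting linear functional. -/
def IsFaceOf (Δ F : Set (Fin d → ℝ)) : Prop :=
  ∃ y : Fin d → ℝ, F = {x ∈ Δ | pairR x y = ordP Δ y}

/-- Dimension of a subset of ℝ^d. -/
def dimSet (S : Set (Fin d → ℝ)) : ℕ := Module.finrank ℝ ↥(vectorSpan ℝ S)

/-- The face of the polar polytope dual to a face F of Δ. -/
def dualFace (Δ F : Set (Fin d → ℝ)) : Set (Fin d → ℝ) :=
  {y ∈ polarSet Δ | ∀ x ∈ F, pairR x y = -1}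

/-- The cone ℝ_{≥0}·Θ over a set Θ. -/
def coneOver (Θ : Set (Fin d → ℝ)) : Set (Fin d → ℝ) :=
  {x | ∃ c : ℝ, 0 ≤ c ∧ ∃ p ∈ Θ, x = c • p}

/-- A face Θ is ordinary if every lattice point of ℝ_{≥0}Θ lies in some dilate lΘ. -/
def IsOrdinaryFace (Θ : Set (Fin d → ℝ)) : Prop :=
  ∀ n : Fin d → ℤ, toR n ∈ coneOver Θ → ∃ l : ℕ, toR n ∈ (l : ℝ) • Θ

/-- Facet: a face of dimension d-1. -/
def IsFacet (Δ Θ : Set (Fin d → ℝ)) : Prop :=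
  IsFaceOf Δ Θ ∧ dimSet Θ + 1 = d

/-! If 0 is interior to Δ, then ord_Δ(n) is a negative integer for every n ≠ 0, so 0 ∈ Δ^{FI};
and Δ^{FI} grows with Δ, which gives one direction. Conversely take Δ' = [[Δ*]*]: the
operation P ↦ [P*] satisfies [[[P*]*]*] = [P*] on lattice polytopes, and Δ ⊆ Δ'. The key point is
that when Δ^{FI} = {0} the lattice points of Δ* positively span ℝ^d: if v pairs nonnegatively
with all of them, a small multiple of v lies in Δ^{FI}, because ord_Δ(n) = -1 means n ∈ Δ*,
while ord_Δ(n) ≤ -2 leaves room proportional to ‖n‖. Hence [Δ*]* is bounded, Δ' is a lattice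
polytope, and the same argument applied to Δ' shows Δ'^{FI} = {0}. -/

open Bornology Metric Matrix

section Pairing

lemma pairR_eq_dotProduct (x y : Fin d → ℝ) : pairR x y = x ⬝ᵥ y := rfl

lemma pairR_comm (x y : Fin d → ℝ) : pairR x y = pairR y x := dotProduct_comm x y

lemma pairR_smul_left (c : ℝ) (x y : Fin d → ℝ) : pairR (c • x) y = c * pairR x y :=
  smul_dotProduct c x y

lemma pairR_smul_right (c : ℝ) (x y : Fin d → ℝ) : pairR x (c • y) = c * pairR x y :=
  dotProduct_smul c x y

lemma pairR_zero_left (y : Fin d → ℝ) : pairR 0 y = 0 := zero_dotProduct y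

lemma pairR_zero_right (x : Fin d → ℝ) : pairR x 0 = 0 := dotProduct_zero x

lemma pairR_single_left (i : Fin d) (s : ℝ) (y : Fin d → ℝ) : pairR (Pi.single i s) y = s * y i :=
  single_dotProduct y s i

lemma isLinearMap_pairR_left (y : Fin d → ℝ) : IsLinearMap ℝ fun x => pairR x y :=
  ⟨fun x x' => add_dotProduct x x' y, fun c x => smul_dotProduct c x y⟩

lemma continuous_pairR_left (y : Fin d → ℝ) : Continuous fun x => pairR x y := by
  unfold pairR; fun_prop

lemma continuous_pairR_right (x : Fin d → ℝ) : Continuous fun y => pairR x y := by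
  unfold pairR; fun_prop

lemma abs_pairR_le (x y : Fin d → ℝ) : |pairR x y| ≤ d * (‖x‖ * ‖y‖) :=
  calc |pairR x y| ≤ ∑ i, |x i * y i| := abs_sum_le_sum_abs _ _
    _ ≤ ∑ _i : Fin d, ‖x‖ * ‖y‖ := sum_le_sum fun i _ => by
        rw [abs_mul]
        exact mul_le_mul (norm_le_pi_norm x i) (norm_le_pi_norm y i) (abs_nonneg _) (norm_nonneg _)
    _ = d * (‖x‖ * ‖y‖) := by simp

end Pairing

section Order

variable {Δ Δ' : Set (Fin d → ℝ)} {x y : Fin d → ℝ}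

lemma ordP_le (hΔ : IsCompact Δ) (hx : x ∈ Δ) (y : Fin d → ℝ) : ordP Δ y ≤ pairR x y :=
  csInf_le (hΔ.image (continuous_pairR_left y)).bddBelow ⟨x, hx, rfl⟩

lemma le_ordP {c : ℝ} (hne : Δ.Nonempty) (h : ∀ x ∈ Δ, c ≤ pairR x y) : c ≤ ordP Δ y :=
  le_csInf (hne.image _) (by rintro _ ⟨x, hx, rfl⟩; exact h x hx)

lemma mem_polarSet_iff_neg_one_le_ordP (hΔ : IsCompact Δ) (hne : Δ.Nonempty) :
    y ∈ polarSet Δ ↔ -1 ≤ ordP Δ y :=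
  ⟨le_ordP hne, fun h _ hx => h.trans (ordP_le hΔ hx y)⟩

lemma fineInterior_mono (hΔ' : IsCompact Δ') (hne : Δ.Nonempty) (h : Δ ⊆ Δ') :
    fineInterior Δ ⊆ fineInterior Δ' := fun x hx n hn =>
  le_trans (by gcongr; exact le_ordP hne fun z hz => ordP_le hΔ' (h hz) _) (hx n hn)

lemma exists_mem_ordP_convexHull_eq {T : Set (Fin d → ℝ)} (hT : T.Finite) (hne : T.Nonempty)
    (y : Fin d → ℝ) : ∃ t ∈ T, ordP (convexHull ℝ T) y = pairR t y := by
  obtain ⟨t, ht, hmin⟩ := Set.exists_min_image T (fun x => pairR x y) hT hne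
  refine ⟨t, ht, IsLeast.csInf_eq ⟨⟨t, subset_convexHull ℝ T ht, rfl⟩, ?_⟩⟩
  rintro _ ⟨x, hx, rfl⟩
  exact convexHull_min hmin (convex_halfSpace_ge (isLinearMap_pairR_left y) _) hx

end Order

section Lattice

@[simp]
lemma toR_zero : toR (0 : Fin d → ℤ) = 0 := funext fun _ => Int.cast_zero

lemma toR_injective : Function.Injective (toR : (Fin d → ℤ) → Fin d → ℝ) :=
  fun _ _ h => funext fun i => Int.cast_injective (congrFun h i)

lemma pairR_toR_toR (m n : Fin d → ℤ) : pairR (toR m) (toR n) = ((∑ i, m i * n i : ℤ) : ℝ) := by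
  simp [pairR, toR]

lemma norm_toR (n : Fin d → ℤ) : ‖toR n‖ = ‖n‖ := by
  simp only [Pi.norm_def]
  congr 2

lemma isLatticePoint_toR (n : Fin d → ℤ) : IsLatticePoint (toR n) := fun i => ⟨n i, rfl⟩

lemma isLatticePoint_iff {x : Fin d → ℝ} : IsLatticePoint x ↔ x ∈ Set.range toR :=
  ⟨fun h => ⟨fun i => (h i).choose, funext fun i => (h i).choose_spec.symm⟩,
    by rintro ⟨n, rfl⟩; exact isLatticePoint_toR n⟩

lemma latticeHull_eq_convexHull_image (P : Set (Fin d → ℝ)) :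
    latticeHull P = convexHull ℝ (toR '' {n | toR n ∈ P}) := by
  unfold latticeHull
  congr 1
  ext x
  simp only [isLatticePoint_iff, Set.mem_ofPred_eq, Set.mem_range, Set.mem_image]
  constructor
  · rintro ⟨hx, n, rfl⟩; exact ⟨n, hx, rfl⟩
  · rintro ⟨n, hn, rfl⟩; exact ⟨hn, n, rfl⟩

lemma finite_setOf_toR_mem {P : Set (Fin d → ℝ)} (hP : IsBounded P) :
    {n : Fin d → ℤ | toR n ∈ P}.Finite := by
  obtain ⟨C, hC⟩ := isBounded_iff_forall_norm_le.mp hP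
  have hb : IsBounded {n : Fin d → ℤ | toR n ∈ P} :=
    isBounded_iff_forall_norm_le.mpr ⟨C, fun n hn => norm_toR n ▸ hC _ hn⟩
  simpa using finite_isBounded_inter_isClosed IsDiscrete.univ hb isClosed_univ

lemma latticeHull_subset {P : Set (Fin d → ℝ)} (hP : Convex ℝ P) : latticeHull P ⊆ P :=
  convexHull_min (fun _ hx => hx.1) hP

lemma latticeHull_mono {P Q : Set (Fin d → ℝ)} (h : P ⊆ Q) : latticeHull P ⊆ latticeHull Q :=
  convexHull_mono fun _ hx => ⟨h hx.1, hx.2⟩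

lemma latticeHull_latticeHull (P : Set (Fin d → ℝ)) :
    latticeHull (latticeHull P) = latticeHull P :=
  (latticeHull_subset (convex_convexHull ℝ _)).antisymm
    (convexHull_mono fun _ hx => ⟨subset_convexHull ℝ _ hx, hx.2⟩)

lemma isLatticePolytope_latticeHull {P : Set (Fin d → ℝ)} (hP : IsBounded P) :
    IsLatticePolytope (latticeHull P) :=
  ⟨(finite_setOf_toR_mem hP).toFinset, by
    rw [latticeHull_eq_convexHull_image, Set.Finite.coe_toFinset]⟩

namespace IsLatticePolytope

variable {Δ : Set (Fin d → ℝ)}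

lemma isCompact (hΔ : IsLatticePolytope Δ) : IsCompact Δ := by
  obtain ⟨S, rfl⟩ := hΔ
  exact (S.finite_toSet.image toR).isCompact_convexHull ℝ

lemma latticeHull_eq (hΔ : IsLatticePolytope Δ) : latticeHull Δ = Δ := by
  obtain ⟨S, rfl⟩ := hΔ
  refine (latticeHull_subset (convex_convexHull ℝ _)).antisymm (convexHull_mono ?_)
  rintro _ ⟨n, hn, rfl⟩
  exact ⟨subset_convexHull ℝ _ ⟨n, hn, rfl⟩, isLatticePoint_toR n⟩

lemma exists_ordP_toR_eq_intCast (hΔ : IsLatticePolytope Δ) (hne : Δ.Nonempty)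
    (n : Fin d → ℤ) : ∃ z : ℤ, ordP Δ (toR n) = z := by
  obtain ⟨S, rfl⟩ := hΔ
  obtain ⟨_, ⟨s, -, rfl⟩, hs⟩ := exists_mem_ordP_convexHull_eq (S.finite_toSet.image toR)
    (convexHull_nonempty_iff.mp hne) (toR n)
  exact ⟨_, hs.trans (pairR_toR_toR s n)⟩

end IsLatticePolytope

end Lattice

section InteriorBall

variable {Δ : Set (Fin d → ℝ)} {r : ℝ}

lemma exists_closedBall_subset_of_zero_mem_interior (h0 : (0 : Fin d → ℝ) ∈ interior Δ) :
    ∃ r > 0, closedBall 0 r ⊆ Δ :=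
  nhds_basis_closedBall.mem_iff.mp (mem_interior_iff_mem_nhds.mp h0)

lemma ordP_le_neg_mul_norm (hΔ : IsCompact Δ) (hr : 0 ≤ r) (hball : closedBall 0 r ⊆ Δ)
    (y : Fin d → ℝ) : ordP Δ y ≤ -(r * ‖y‖) := by
  have hsingle : ∀ i (s : ℝ), |s| ≤ r → ordP Δ y ≤ s * y i := fun i s hs => by
    rw [← pairR_single_left]
    exact ordP_le hΔ (hball (by simpa [Pi.norm_single] using hs)) y
  have hzero : ordP Δ y ≤ 0 := by
    simpa [pairR_zero_left] using ordP_le hΔ (hball (mem_closedBall_self hr)) y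
  rw [le_neg, ← Real.norm_of_nonneg hr, ← norm_smul]
  refine (pi_norm_le_iff_of_nonneg (by linarith)).mpr fun i => ?_
  rw [Pi.smul_apply, smul_eq_mul, Real.norm_eq_abs, abs_le]
  have h₁ := hsingle i r (abs_of_nonneg hr).le
  have h₂ := hsingle i (-r) (by rw [abs_neg, abs_of_nonneg hr])
  constructor <;> linarith

lemma isBounded_polarSet (hΔ : IsCompact Δ) (hr : 0 < r) (hball : closedBall 0 r ⊆ Δ) :
    IsBounded (polarSet Δ) := by
  refine isBounded_iff_forall_norm_le.mpr ⟨1 / r, fun y hy => ?_⟩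
  have := (le_ordP ⟨0, hball (mem_closedBall_self hr.le)⟩ hy).trans
    (ordP_le_neg_mul_norm hΔ hr.le hball y)
  rw [le_div_iff₀ hr]
  linarith

lemma IsLatticePolytope.exists_ordP_toR_eq_intCast_le_neg_one (hΔ : IsLatticePolytope Δ)
    (hr : 0 < r) (hball : closedBall 0 r ⊆ Δ) {n : Fin d → ℤ} (hn : n ≠ 0) :
    ∃ z : ℤ, z ≤ -1 ∧ ordP Δ (toR n) = z := by
  obtain ⟨z, hz⟩ := hΔ.exists_ordP_toR_eq_intCast ⟨0, hball (mem_closedBall_self hr.le)⟩ n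
  have hpos : 0 < r * ‖toR n‖ := mul_pos hr (norm_pos_iff.mpr (toR_zero (d := d) ▸ toR_injective.ne hn))
  have hneg : (z : ℝ) < 0 := by
    linarith [hz ▸ ordP_le_neg_mul_norm hΔ.isCompact hr.le hball (toR n)]
  have hneg' : z < 0 := by exact_mod_cast hneg
  exact ⟨z, by omega, hz⟩

lemma zero_mem_fineInterior (hΔ : IsLatticePolytope Δ) (hr : 0 < r)
    (hball : closedBall 0 r ⊆ Δ) : (0 : Fin d → ℝ) ∈ fineInterior Δ := fun n hn => by
  obtain ⟨z, hz1, hz⟩ := hΔ.exists_ordP_toR_eq_intCast_le_neg_one hr hball hn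
  rw [hz, pairR_zero_left]
  exact_mod_cast (by omega : z + 1 ≤ 0)

lemma mem_fineInterior_of_nonneg_on_polar {w : Fin d → ℝ} (hΔ : IsLatticePolytope Δ)
    (hr : 0 < r) (hball : closedBall 0 r ⊆ Δ) (hw : d * ‖w‖ ≤ r / 2)
    (hpol : ∀ m, toR m ∈ polarSet Δ → 0 ≤ pairR w (toR m)) : w ∈ fineInterior Δ := by
  intro n hn
  obtain ⟨z, hz1, hz⟩ := hΔ.exists_ordP_toR_eq_intCast_le_neg_one hr hball hn
  rcases hz1.eq_or_lt with rfl | hz2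
  · have hn_polar : toR n ∈ polarSet Δ :=
      (mem_polarSet_iff_neg_one_le_ordP hΔ.isCompact ⟨0, hball (mem_closedBall_self hr.le)⟩).mpr
        (by simp [hz])
    rw [hz]
    push_cast
    linarith [hpol n hn_polar]
  · have hz2' : (z : ℝ) ≤ -2 := by exact_mod_cast (by omega : z ≤ -2)
    have hord := ordP_le_neg_mul_norm hΔ.isCompact hr.le hball (toR n)
    calc ordP Δ (toR n) + 1 ≤ ordP Δ (toR n) / 2 := by rw [hz]; linarith
      _ ≤ -(r / 2 * ‖toR n‖) := by linarith
      _ ≤ -(d * (‖w‖ * ‖toR n‖)) := by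
          rw [← mul_assoc]; exact neg_le_neg (mul_le_mul_of_nonneg_right hw (norm_nonneg _))
      _ ≤ pairR w (toR n) := neg_le_of_abs_le (abs_pairR_le w (toR n))

lemma eq_zero_of_nonneg_on_polar {v : Fin d → ℝ} (hΔ : IsLatticePolytope Δ) (hr : 0 < r)
    (hball : closedBall 0 r ⊆ Δ) (hFI : fineInterior Δ = {0})
    (hv : ∀ m, toR m ∈ polarSet Δ → 0 ≤ pairR v (toR m)) : v = 0 := by
  set t := r / (2 * (d * ‖v‖ + 1)) with ht_def
  have ht : 0 < t := by positivity
  have hmem : t • v ∈ fineInterior Δ := by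
    refine mem_fineInterior_of_nonneg_on_polar hΔ hr hball ?_ fun m hm => ?_
    · calc (d : ℝ) * ‖t • v‖ = t * (d * ‖v‖) := by rw [norm_smul, Real.norm_of_nonneg ht.le]; ring
        _ ≤ t * (d * ‖v‖ + 1) := by gcongr; linarith
        _ = r / 2 := by rw [ht_def]; field_simp
    · rw [pairR_smul_left]; exact mul_nonneg ht.le (hv m hm)
  rw [hFI] at hmem
  exact (smul_eq_zero.mp hmem).resolve_left ht.ne'

end InteriorBall

lemma isBounded_polarSet_finset (W : Finset (Fin d → ℝ))
    (hW : ∀ v, (∀ m ∈ W, 0 ≤ pairR m v) → v = 0) : IsBounded (polarSet (W : Set (Fin d → ℝ))) := by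
  rcases subsingleton_or_nontrivial (Fin d → ℝ) with hsub | hnt
  · exact (Set.toFinite _).isBounded
  obtain ⟨u, hu⟩ := (NormedSpace.sphere_nonempty (x := (0 : Fin d → ℝ))).mpr zero_le_one
  have hWne : W.Nonempty := by
    by_contra hW0
    rw [Finset.not_nonempty_iff_eq_empty] at hW0
    exact ne_of_mem_sphere hu one_ne_zero (hW u (by simp [hW0]))
  set f : (Fin d → ℝ) → ℝ := fun v => W.inf' hWne fun m => pairR m v
  obtain ⟨v₀, hv₀, hmax⟩ := (isCompact_sphere 0 1).exists_isMaxOn ⟨u, hu⟩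
    (Continuous.finset_inf'_apply hWne fun m _ => continuous_pairR_right m).continuousOn
  have hc : f v₀ < 0 := by
    by_contra! h
    exact ne_of_mem_sphere hv₀ one_ne_zero (hW v₀ fun m hm => h.trans (Finset.inf'_le _ hm))
  refine isBounded_iff_forall_norm_le.mpr ⟨1 / -f v₀, fun y hy => ?_⟩
  rcases eq_or_ne y 0 with rfl | hy0
  · simpa using (one_div_pos.mpr (neg_pos.mpr hc)).le
  have hyn : 0 < ‖y‖ := norm_pos_iff.mpr hy0
  obtain ⟨m, hm, hfm⟩ := W.exists_mem_eq_inf' hWne fun m => pairR m (‖y‖⁻¹ • y)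
  have hle : pairR m (‖y‖⁻¹ • y) ≤ f v₀ :=
    hfm ▸ hmax (by simp [norm_smul, hyn.ne'] : ‖y‖⁻¹ • y ∈ sphere (0 : Fin d → ℝ) 1)
  have hge : -1 ≤ ‖y‖ * pairR m (‖y‖⁻¹ • y) := by
    rw [pairR_smul_right, mul_inv_cancel_left₀ hyn.ne']
    exact hy m hm
  rw [le_div_iff₀ (neg_pos.mpr hc)]
  nlinarith

section LatticePolar

/-- `[P*]` in the notation of the statement. -/
def latticePolar (P : Set (Fin d → ℝ)) : Set (Fin d → ℝ) := latticeHull (polarSet P)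

variable {P Q : Set (Fin d → ℝ)}

lemma polarSet_antitone (h : P ⊆ Q) : polarSet Q ⊆ polarSet P := fun _ hy x hx => hy x (h hx)

lemma convex_polarSet (P : Set (Fin d → ℝ)) : Convex ℝ (polarSet P) :=
  fun y₁ hy₁ y₂ hy₂ a b ha hb hab x hx => by
    have h₁ : -1 ≤ x ⬝ᵥ y₁ := hy₁ x hx
    have h₂ : -1 ≤ x ⬝ᵥ y₂ := hy₂ x hx
    rw [pairR_eq_dotProduct, dotProduct_add, dotProduct_smul, dotProduct_smul, smul_eq_mul,
      smul_eq_mul]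
    nlinarith

lemma latticePolar_subset_polarSet (P : Set (Fin d → ℝ)) : latticePolar P ⊆ polarSet P :=
  latticeHull_subset (convex_polarSet P)

lemma latticePolar_antitone (h : P ⊆ Q) : latticePolar Q ⊆ latticePolar P :=
  latticeHull_mono (polarSet_antitone h)

lemma subset_latticePolar_latticePolar (hP : latticeHull P = P) :
    P ⊆ latticePolar (latticePolar P) :=
  calc P = latticeHull P := hP.symm
    _ ⊆ latticePolar (latticePolar P) := latticeHull_mono fun y hy z hz =>
      pairR_comm y z ▸ latticePolar_subset_polarSet P hz y hy

lemma latticePolar_latticePolar_latticePolar (hP : latticeHull P = P) :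
    latticePolar (latticePolar (latticePolar P)) = latticePolar P :=
  (latticePolar_antitone (subset_latticePolar_latticePolar hP)).antisymm
    (subset_latticePolar_latticePolar (latticeHull_latticeHull _))

lemma neg_one_le_ordP_latticePolar {y : Fin d → ℝ} (hne : (latticePolar Q).Nonempty)
    (hy : y ∈ Q) : -1 ≤ ordP (latticePolar Q) y :=
  le_ordP hne fun x hx => pairR_comm y x ▸ latticePolar_subset_polarSet Q hx y hy

end LatticePolar

section Pseudoreflexive

variable {Δ : Set (Fin d → ℝ)}

lemma isBounded_polarSet_latticePolar (hΔ : IsLatticePolytope Δ)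
    (h0 : (0 : Fin d → ℝ) ∈ interior Δ) (hFI : fineInterior Δ = {0}) :
    IsBounded (polarSet (latticePolar Δ)) := by
  obtain ⟨r, hr, hball⟩ := exists_closedBall_subset_of_zero_mem_interior h0
  have hfin := finite_setOf_toR_mem (isBounded_polarSet hΔ.isCompact hr hball)
  refine (isBounded_polarSet_finset (hfin.toFinset.image toR) fun v hv => ?_).subset
    (polarSet_antitone ?_)
  · refine eq_zero_of_nonneg_on_polar hΔ hr hball hFI fun m hm => ?_
    rw [pairR_comm]
    exact hv _ (Finset.mem_image_of_mem _ (hfin.mem_toFinset.mpr hm))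
  · intro x hx
    obtain ⟨n, hn, rfl⟩ := Finset.mem_image.mp hx
    exact subset_convexHull ℝ _ ⟨hfin.mem_toFinset.mp hn, isLatticePoint_toR n⟩

lemma isPseudoreflexive_latticePolar_latticePolar (hΔ : IsLatticePolytope Δ)
    (h0 : (0 : Fin d → ℝ) ∈ interior Δ) (hFI : fineInterior Δ = {0}) :
    IsPseudoreflexive (latticePolar (latticePolar Δ)) := by
  obtain ⟨r, hr, hball⟩ := exists_closedBall_subset_of_zero_mem_interior h0
  have hsub := subset_latticePolar_latticePolar hΔ.latticeHull_eq
  have hΔ' : IsLatticePolytope (latticePolar (latticePolar Δ)) :=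
    isLatticePolytope_latticeHull (isBounded_polarSet_latticePolar hΔ h0 hFI)
  refine ⟨hΔ', ?_, (congrArg latticePolar
    (latticePolar_latticePolar_latticePolar hΔ.latticeHull_eq)).symm⟩
  refine Set.Subset.antisymm (fun x hx => ?_)
    (Set.singleton_subset_iff.mpr (zero_mem_fineInterior hΔ' hr (hball.trans hsub)))
  refine eq_zero_of_nonneg_on_polar hΔ hr hball hFI fun m hm => ?_
  rcases eq_or_ne m 0 with rfl | hm0
  · simp [pairR_zero_right]
  · have := neg_one_le_ordP_latticePolar ⟨0, hsub (hball (mem_closedBall_self hr.le))⟩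
      (subset_convexHull ℝ _ ⟨hm, isLatticePoint_toR m⟩)
    linarith [hx m hm0]

end Pseudoreflexive

theorem stmt8_general {d : ℕ} (Δ : Set (Fin d → ℝ)) (h1 : IsLatticePolytope Δ)
    (h0 : (0 : Fin d → ℝ) ∈ interior Δ) :
    fineInterior Δ = {0} ↔
      ((0 : Fin d → ℝ) ∈ interior Δ ∧
        ∃ Δ' : Set (Fin d → ℝ), IsPseudoreflexive Δ' ∧ Δ ⊆ Δ') := by
  obtain ⟨r, hr, hball⟩ := exists_closedBall_subset_of_zero_mem_interior h0
  refine ⟨fun hFI => ⟨h0, _, isPseudoreflexive_latticePolar_latticePolar h1 h0 hFI,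
    subset_latticePolar_latticePolar h1.latticeHull_eq⟩, ?_⟩
  rintro ⟨-, Δ', ⟨hΔ', hFI', -⟩, hsub⟩
  refine Set.Subset.antisymm ?_ (Set.singleton_subset_iff.mpr (zero_mem_fineInterior h1 hr hball))
  exact hFI' ▸ fineInterior_mono hΔ'.isCompact ⟨0, hball (mem_closedBall_self hr.le)⟩ hsub

/-- for a d-dimensional lattice polytope containing 0 in its interior,
Δ^{FI} = {0} iff 0 is interior to Δ and Δ is contained in some pseudoreflexive polytope. -/
theorem stmt8 {d : ℕ} (Δ : Set (Fin d → ℝ)) (h1 : IsLatticePolytope Δ)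
    (h2 : (interior Δ).Nonempty) (h0 : (0 : Fin d → ℝ) ∈ interior Δ) :
    fineInterior Δ = {0} ↔
      ((0 : Fin d → ℝ) ∈ interior Δ ∧
        ∃ Δ' : Set (Fin d → ℝ), IsPseudoreflexive Δ' ∧ Δ ⊆ Δ') :=
  stmt8_general Δ h1 h0
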